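/- arXiv:1704.00147 — 2 statements merged into one kernel-verified Lean document; each statement's English description precedes it below -/
import Mathlib

section
/- Let 0 < β < 1/4 and let v(t) = t^{−β} for 0 < t < 1. Then v ∈ H^β(0,1), i.e., the Gagliardo seminorm ∫_0^1 ∫_0^1 |v(s) − v(t)|² / |s−t|^{1+2β} ds dt is finite. -/
/-!
For `0 < t < s` the difference `a = t^{-β} - s^{-β}` is at most `t^{-β}` and, since
`(t/s)^β ≥ t/s`, at most `t^{-β} (s - t)/t`. Interpolating, `a² ≤ t^{-2β} ((s - t)/t)^{1/2}`,
so the Gagliardo integrand is bounded by `(s^{-p} + t^{-p}) |s - t|^{-p}` with `p = 2β + 1/2`.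
The condition `β < 1/4` is exactly `p < 1`, so `s^{-p}` is integrable on `(0,1)` and the kernel
`|u|^{-p}` is locally integrable; by translation its integral over `t ∈ (0,1)` is bounded
uniformly in `s`, and Tonelli gives a finite double integral.
-/

open MeasureTheory Real Set
open scoped ENNReal

theorem rpow_neg_sub_rpow_neg_le {β s t : ℝ} (hβ1 : β ≤ 1) (ht : 0 < t)
    (hts : t ≤ s) : t ^ (-β) - s ^ (-β) ≤ t ^ (-β) * ((s - t) / t) := by
  have hs : 0 < s := ht.trans_le hts
  have hratio : t / s ≤ (t / s) ^ β := by
    simpa using rpow_le_rpow_of_exponent_ge (div_pos ht hs) ((div_le_one hs).2 hts) hβ1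
  have hs_eq : s ^ (-β) = t ^ (-β) * (t / s) ^ β := by
    rw [div_rpow ht.le hs.le, rpow_neg ht.le, rpow_neg hs.le]
    field_simp
  calc t ^ (-β) - s ^ (-β) ≤ t ^ (-β) * (1 - t / s) := by
        rw [hs_eq, mul_sub, mul_one]
        gcongr
    _ = t ^ (-β) * ((s - t) / s) := by rw [one_sub_div hs.ne']
    _ ≤ t ^ (-β) * ((s - t) / t) := by gcongr

theorem sq_le_mul_rpow_of_le_of_le_mul {a X u : ℝ} (ha : 0 ≤ a) (hu : 0 ≤ u) (haX : a ≤ X)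
    (haXu : a ≤ X * u) : a ^ 2 ≤ X ^ 2 * u ^ (1 / 2 : ℝ) := by
  have hX : 0 ≤ X := ha.trans haX
  calc a ^ 2 = a ^ (3 / 2 : ℝ) * a ^ (1 / 2 : ℝ) := by
        rw [← rpow_add' ha (by norm_num)]; norm_num
    _ ≤ X ^ (3 / 2 : ℝ) * (X * u) ^ (1 / 2 : ℝ) := by gcongr
    _ = X ^ 2 * u ^ (1 / 2 : ℝ) := by
        rw [mul_rpow hX hu, ← mul_assoc, ← rpow_add' hX (by norm_num)]; norm_num

theorem sq_rpow_neg_sub_div_rpow_le {β s t : ℝ} (hβ0 : 0 ≤ β) (hβ1 : β ≤ 1) (ht : 0 < t)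
    (hts : t < s) :
    (t ^ (-β) - s ^ (-β)) ^ 2 / (s - t) ^ (1 + 2 * β) ≤
      t ^ (-(2 * β + 1 / 2)) * (s - t) ^ (-(2 * β + 1 / 2)) := by
  have hd : 0 < s - t := sub_pos.2 hts
  have hsq := sq_le_mul_rpow_of_le_of_le_mul
    (sub_nonneg.2 (rpow_le_rpow_of_nonpos ht hts.le (neg_nonpos.2 hβ0)))
    (div_nonneg hd.le ht.le) (sub_le_self _ (rpow_nonneg (ht.trans hts).le _))
    (rpow_neg_sub_rpow_neg_le hβ1 ht hts.le)
  rw [div_le_iff₀ (rpow_pos_of_pos hd _)]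
  refine hsq.trans_eq ?_
  have hexp : -(2 * β + 1 / 2) + (1 + 2 * β) = 1 / 2 := by ring
  rw [mul_assoc, ← rpow_add hd, hexp, show -(2 * β + 1 / 2) = -β * 2 - 1 / 2 by ring,
    rpow_sub ht, rpow_mul ht.le, div_rpow hd.le ht.le]
  norm_num
  ring

theorem ofReal_sq_rpow_neg_sub_div_le {β s t : ℝ} (hβ0 : 0 ≤ β) (hβ1 : β ≤ 1) (hs : 0 < s)
    (ht : 0 < t) :
    ENNReal.ofReal ((s ^ (-β) - t ^ (-β)) ^ 2 / |s - t| ^ (1 + 2 * β)) ≤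
      (ENNReal.ofReal (s ^ (-(2 * β + 1 / 2))) + ENNReal.ofReal (t ^ (-(2 * β + 1 / 2)))) *
        ENNReal.ofReal (|s - t| ^ (-(2 * β + 1 / 2))) := by
  wlog hts : t ≤ s generalizing s t
  · have := this ht hs (le_of_not_ge hts)
    rwa [abs_sub_comm, ← neg_sub, neg_sq, add_comm (ENNReal.ofReal (t ^ _))] at this
  rw [← ENNReal.ofReal_add (by positivity) (by positivity),
    ← ENNReal.ofReal_mul (by positivity)]
  refine ENNReal.ofReal_le_ofReal ?_
  rcases hts.eq_or_lt with rfl | hlt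
  · simp only [sub_self, ne_eq, OfNat.ofNat_ne_zero, not_false_eq_true, zero_pow, zero_div]
    positivity
  rw [abs_of_pos (sub_pos.2 hlt), ← neg_sub, neg_sq]
  calc _ ≤ t ^ (-(2 * β + 1 / 2)) * (s - t) ^ (-(2 * β + 1 / 2)) :=
        sq_rpow_neg_sub_div_rpow_le hβ0 hβ1 ht hlt
    _ ≤ _ := by gcongr; exact le_add_of_nonneg_left (by positivity)

theorem setLIntegral_comp_sub_left_le {G : Type*} [MeasurableSpace G] [AddGroup G]
    [MeasurableAdd G] [MeasurableNeg G] {μ : Measure G} [μ.IsAddLeftInvariant] [μ.IsNegInvariant]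
    {A B : Set G} (hA : MeasurableSet A) (hB : MeasurableSet B) {g : G}
    (hAB : ∀ x ∈ A, g - x ∈ B) (f : G → ℝ≥0∞) :
    ∫⁻ x in A, f (g - x) ∂μ ≤ ∫⁻ x in B, f x ∂μ :=
  calc ∫⁻ x in A, f (g - x) ∂μ = ∫⁻ x in A, B.indicator f (g - x) ∂μ :=
        setLIntegral_congr_fun hA fun x hx => (indicator_of_mem (hAB x hx) f).symm
    _ ≤ ∫⁻ x, B.indicator f (g - x) ∂μ := setLIntegral_le_lintegral _ _
    _ = ∫⁻ x in B, f x ∂μ := by rw [lintegral_sub_left_eq_self, lintegral_indicator hB]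

theorem locallyIntegrable_abs_rpow_neg {c : ℝ} (hc : c < 1) :
    LocallyIntegrable (fun u : ℝ => |u| ^ (-c)) :=
  locallyIntegrable_of_norm_le_rpow (C := 1) (by simp) (by simpa using hc)
    (Filter.Eventually.of_forall fun u => by
      rw [norm_of_nonneg (rpow_nonneg (abs_nonneg u) _), one_mul, Real.norm_eq_abs])
    (by fun_prop : Measurable fun u : ℝ => |u| ^ (-c)).aestronglyMeasurable

theorem lintegral_Ioo_abs_sub_rpow_neg_le (c : ℝ) {s : ℝ} (hs : s ∈ Icc (0 : ℝ) 1) :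
    ∫⁻ t in Ioo (0 : ℝ) 1, ENNReal.ofReal (|s - t| ^ (-c)) ≤
      ∫⁻ u in Ioo (-1 : ℝ) 1, ENNReal.ofReal (|u| ^ (-c)) :=
  setLIntegral_comp_sub_left_le measurableSet_Ioo measurableSet_Ioo
    (fun t ht => ⟨by linarith [hs.1, ht.2], by linarith [hs.2, ht.1]⟩)
    (fun u => ENNReal.ofReal (|u| ^ (-c)))

theorem lintegral_Ioo_mul_abs_sub_rpow_neg_lt_top {c : ℝ} (hc : c < 1) {w : ℝ → ℝ≥0∞}
    (hw : ∫⁻ s in Ioo (0 : ℝ) 1, w s < ⊤) :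
    ∫⁻ s in Ioo (0 : ℝ) 1, ∫⁻ t in Ioo (0 : ℝ) 1, w s * ENNReal.ofReal (|s - t| ^ (-c)) < ⊤ := by
  set C := ∫⁻ u in Ioo (-1 : ℝ) 1, ENNReal.ofReal (|u| ^ (-c))
  have hC : C < ⊤ :=
    (((locallyIntegrable_abs_rpow_neg hc).integrableOn_isCompact isCompact_Icc).mono_set
      Ioo_subset_Icc_self).lintegral_lt_top
  calc ∫⁻ s in Ioo (0 : ℝ) 1, ∫⁻ t in Ioo (0 : ℝ) 1, w s * ENNReal.ofReal (|s - t| ^ (-c))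
      ≤ ∫⁻ s in Ioo (0 : ℝ) 1, w s * C := setLIntegral_mono' measurableSet_Ioo fun s hs => by
        rw [lintegral_const_mul _ (by fun_prop)]
        exact mul_le_mul_right (lintegral_Ioo_abs_sub_rpow_neg_le c (Ioo_subset_Icc_self hs)) _
    _ = (∫⁻ s in Ioo (0 : ℝ) 1, w s) * C := lintegral_mul_const' _ _ hC.ne
    _ < ⊤ := ENNReal.mul_lt_top hw hC

theorem lintegral_Ioo_add_mul_abs_sub_rpow_neg_lt_top {c : ℝ} (hc : c < 1) {w : ℝ → ℝ≥0∞}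
    (hwm : Measurable w) (hw : ∫⁻ s in Ioo (0 : ℝ) 1, w s < ⊤) :
    ∫⁻ s in Ioo (0 : ℝ) 1, ∫⁻ t in Ioo (0 : ℝ) 1,
      (w s + w t) * ENNReal.ofReal (|s - t| ^ (-c)) < ⊤ := by
  have hswap : ∫⁻ s in Ioo (0 : ℝ) 1, ∫⁻ t in Ioo (0 : ℝ) 1, w t * ENNReal.ofReal (|s - t| ^ (-c))
      = ∫⁻ s in Ioo (0 : ℝ) 1, ∫⁻ t in Ioo (0 : ℝ) 1, w s * ENNReal.ofReal (|s - t| ^ (-c)) := by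
    rw [lintegral_lintegral_swap (by fun_prop)]
    simp_rw [abs_sub_comm]
  have hhalf := lintegral_Ioo_mul_abs_sub_rpow_neg_lt_top hc hw
  calc ∫⁻ s in Ioo (0 : ℝ) 1, ∫⁻ t in Ioo (0 : ℝ) 1, (w s + w t) * ENNReal.ofReal (|s - t| ^ (-c))
      = ∫⁻ s in Ioo (0 : ℝ) 1, ((∫⁻ t in Ioo (0 : ℝ) 1, w s * ENNReal.ofReal (|s - t| ^ (-c))) +
          ∫⁻ t in Ioo (0 : ℝ) 1, w t * ENNReal.ofReal (|s - t| ^ (-c))) :=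
        lintegral_congr fun s => by simp_rw [add_mul]; exact lintegral_add_left (by fun_prop) _
    _ = (∫⁻ s in Ioo (0 : ℝ) 1, ∫⁻ t in Ioo (0 : ℝ) 1, w s * ENNReal.ofReal (|s - t| ^ (-c))) +
          ∫⁻ s in Ioo (0 : ℝ) 1, ∫⁻ t in Ioo (0 : ℝ) 1, w t * ENNReal.ofReal (|s - t| ^ (-c)) :=
        lintegral_add_left (Measurable.lintegral_prod_right
          (f := fun s t => w s * ENNReal.ofReal (|s - t| ^ (-c))) (by fun_prop)) _
    _ < ⊤ := by rw [hswap]; exact ENNReal.add_lt_top.2 ⟨hhalf, hhalf⟩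

/-- The function `t ↦ t^{-β}` belongs to `H^β(0,1)` for `0 < β < 1/4`:
its Gagliardo seminorm is finite. -/
theorem stmt8 (β : ℝ) (hβ0 : 0 < β) (hβ : β < 1/4) :
    ∫⁻ s in Set.Ioo (0:ℝ) 1, ∫⁻ t in Set.Ioo (0:ℝ) 1,
      ENNReal.ofReal ((s ^ (-β) - t ^ (-β)) ^ 2 / |s - t| ^ (1 + 2 * β)) < ⊤ := by
  have hp : 2 * β + 1 / 2 < 1 := by linarith
  have hweight : ∫⁻ s in Ioo (0 : ℝ) 1, ENNReal.ofReal (s ^ (-(2 * β + 1 / 2))) < ⊤ :=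
    ((intervalIntegral.integrableOn_Ioo_rpow_iff one_pos).2 (by linarith)).lintegral_lt_top
  refine lt_of_le_of_lt ?_ (lintegral_Ioo_add_mul_abs_sub_rpow_neg_lt_top hp (by fun_prop) hweight)
  refine setLIntegral_mono' measurableSet_Ioo fun s hs =>
    setLIntegral_mono' measurableSet_Ioo fun t ht => ?_
  exact ofReal_sq_rpow_neg_sub_div_le hβ0.le (by linarith) hs.1 ht.1
end

section
/- Let 0 < α < 1 and v ∈ H¹(0,T) with v extended by zero outside (0,T) and Dv := v'. Then ∫_0^T (I_{0+}^α v')(t) v'(t) dt ≥ 0, i.e., the Riemann-Liouville fractional integration operator of order α is positive semidefinite on L²(0,T). -/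
open MeasureTheory Real Set Filter

/-- Left Riemann-Liouville fractional integral on `(0, x)`. -/
noncomputable def RLI (β : ℝ) (v : ℝ → ℝ) (x : ℝ) : ℝ :=
  (Real.Gamma β)⁻¹ * ∫ t in (0:ℝ)..x, (x - t) ^ (β - 1) * v t
/-- Fourier transform with the convention `(2π)^{-1/2} ∫ e^{-ixξ} v(x) dx`. -/
noncomputable def FT (v : ℝ → ℝ) (ξ : ℝ) : ℂ :=
  (Real.sqrt (2 * Real.pi))⁻¹ • ∫ x : ℝ, Complex.exp (-(Complex.I * x * ξ)) * (v x : ℂ)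

/-- Membership in `H^β(ℝ)`. -/
def MemHR (β : ℝ) (w : ℝ → ℝ) : Prop :=
  MemLp w 2 (volume : Measure ℝ) ∧
    MemLp (fun ξ : ℝ => (1 + ξ ^ 2) ^ (β / 2) * ‖FT w ξ‖) 2
      (volume : Measure ℝ)

/-- The `H^β(ℝ)` norm: `L²` norm plus the Fourier seminorm. -/
noncomputable def HnormR (β : ℝ) (w : ℝ → ℝ) : ℝ :=
  Real.sqrt (∫ x : ℝ, (w x) ^ 2) +
    Real.sqrt (∫ ξ : ℝ, |ξ| ^ (2 * β) * ‖FT w ξ‖ ^ 2)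

/-- Membership in `H^β(0,T)`: existence of an `H^β(ℝ)` extension. -/
def MemHT (β T : ℝ) (h : ℝ → ℝ) : Prop :=
  ∃ w : ℝ → ℝ, MemHR β w ∧ ∀ᵐ t ∂(volume.restrict (Set.Ioo 0 T)), w t = h t

/-- The quotient (infimum) norm of `H^β(0,T)`. -/
noncomputable def HnormT (β T : ℝ) (h : ℝ → ℝ) : ℝ :=
  sInf {r : ℝ | ∃ w : ℝ → ℝ, MemHR β w ∧
    (∀ᵐ t ∂(volume.restrict (Set.Ioo 0 T)), w t = h t) ∧ HnormR β w = r}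

/-- The `L²(0,T)` norm. -/
noncomputable def L2T (T : ℝ) (h : ℝ → ℝ) : ℝ :=
  Real.sqrt (∫ t in (0:ℝ)..T, h t ^ 2)

/-- Membership in `H₀^β(0,T)`: in `H^β(0,T)` and approximable by test functions. -/
def MemH0T (β T : ℝ) (h : ℝ → ℝ) : Prop :=
  MemHT β T h ∧ ∀ ε > (0:ℝ), ∃ φ : ℝ → ℝ, ContDiff ℝ (⊤ : ℕ∞) φ ∧
    tsupport φ ⊆ Set.Ioo 0 T ∧ HnormT β T (fun t => h t - φ t) ≤ ε

/-- `g` is the distributional derivative of `F` on `(0,T)`. -/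
def DDOn (T : ℝ) (F g : ℝ → ℝ) : Prop :=
  ∀ φ : ℝ → ℝ, ContDiff ℝ (⊤ : ℕ∞) φ → tsupport φ ⊆ Set.Ioo 0 T →
    ∫ t in (0:ℝ)..T, F t * deriv φ t = -∫ t in (0:ℝ)..T, g t * φ t

lemma diag_null : ((volume : Measure ℝ).prod (volume : Measure ℝ)) {z : ℝ × ℝ | z.1 = z.2} = 0 := by
  have hm : MeasurableSet {z : ℝ × ℝ | z.1 = z.2} :=
    measurableSet_eq_fun measurable_fst measurable_snd
  rw [Measure.prod_apply hm]
  have h : ∀ x : ℝ, (volume : Measure ℝ) (Prod.mk x ⁻¹' {z : ℝ × ℝ | z.1 = z.2}) = 0 := by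
    intro x
    have : (Prod.mk x ⁻¹' {z : ℝ × ℝ | z.1 = z.2}) = {x} := by ext y; simp [eq_comm]
    rw [this]; exact measure_singleton x
  simp [h]

lemma symm_half (b : ℝ → ℝ) (hb : Integrable b (volume : Measure ℝ)) :
    ∫ z : ℝ × ℝ, {p : ℝ × ℝ | p.2 < p.1}.indicator (fun p => b p.2 * b p.1) z
        ∂((volume : Measure ℝ).prod (volume : Measure ℝ))
      = (∫ x, b x) ^ 2 / 2 := by
  set μ2 := ((volume : Measure ℝ).prod (volume : Measure ℝ)) with hμ2
  have hbb : Integrable (fun z : ℝ × ℝ => b z.1 * b z.2) μ2 := hb.mul_prod hb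
  set f : ℝ × ℝ → ℝ := {p : ℝ × ℝ | p.2 < p.1}.indicator (fun p => b p.2 * b p.1) with hf
  set g : ℝ × ℝ → ℝ := {p : ℝ × ℝ | p.1 < p.2}.indicator (fun p => b p.2 * b p.1) with hg
  have hfm : AEStronglyMeasurable f μ2 := by
    refine AEStronglyMeasurable.indicator ?_ ?_
    · exact hbb.aestronglyMeasurable.prod_swap
    · exact measurableSet_lt measurable_snd measurable_fst
  have hgm : AEStronglyMeasurable g μ2 := by
    refine AEStronglyMeasurable.indicator ?_ ?_
    · exact hbb.aestronglyMeasurable.prod_swap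
    · exact measurableSet_lt measurable_fst measurable_snd
  have hfi : Integrable f μ2 := by
    refine hbb.norm.mono' hfm (Eventually.of_forall (fun z => ?_))
    calc ‖f z‖ ≤ ‖b z.2 * b z.1‖ := norm_indicator_le_norm_self _ _
    _ = ‖b z.1 * b z.2‖ := by rw [mul_comm]
  have hgi : Integrable g μ2 := by
    refine hbb.norm.mono' hgm (Eventually.of_forall (fun z => ?_))
    calc ‖g z‖ ≤ ‖b z.2 * b z.1‖ := norm_indicator_le_norm_self _ _
    _ = ‖b z.1 * b z.2‖ := by rw [mul_comm]
  have hswap : ∫ z : ℝ × ℝ, g z ∂μ2 = ∫ z : ℝ × ℝ, f z ∂μ2 := by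
    have := integral_prod_swap (μ := (volume : Measure ℝ)) (ν := (volume : Measure ℝ)) f
    rw [← this]
    congr 1
    funext z
    by_cases h : z.1 < z.2
    · simp [hf, hg, Set.indicator_apply, h, Prod.swap, not_lt.mpr h.le, mul_comm]
    · by_cases h2 : z.2 < z.1
      · simp [hf, hg, Set.indicator_apply, h, h2, Prod.swap]
      · simp [hf, hg, Set.indicator_apply, h, h2, Prod.swap]
  have hsum : (∫ z, f z ∂μ2) + ∫ z, g z ∂μ2 = (∫ x, b x) ^ 2 := by
    rw [← integral_add hfi hgi]
    have hae : (fun z => f z + g z) =ᵐ[μ2] fun z : ℝ × ℝ => b z.1 * b z.2 := by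
      have hd : ∀ᵐ z ∂μ2, z ∉ {p : ℝ × ℝ | p.1 = p.2} := by
        rw [ae_iff]
        simpa using diag_null
      filter_upwards [hd] with z hz
      have hne : z.1 ≠ z.2 := hz
      rcases lt_or_gt_of_ne hne with h | h
      · simp [hf, hg, Set.indicator_apply, h, not_lt.mpr h.le, mul_comm]
      · simp [hf, hg, Set.indicator_apply, h, not_lt.mpr h.le, mul_comm]
    rw [integral_congr_ae hae, integral_prod_mul, sq]
  rw [hswap] at hsum
  linarith

lemma abs_mul_le_sq_add_sq (a b : ℝ) : |a * b| ≤ a ^ 2 + b ^ 2 := by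
  rcases abs_cases (a * b) with ⟨h, _⟩ | ⟨h, _⟩ <;> nlinarith [sq_nonneg (a - b), sq_nonneg (a + b)]

lemma expInt_integrableOn {α : ℝ} (hα1 : α < 1) {c : ℝ} (hc : 0 < c) :
    IntegrableOn (fun l : ℝ => l ^ (-α) * Real.exp (-(c * l))) (Ioi 0) := by
  have h := integrableOn_rpow_mul_exp_neg_mul_rpow (p := 1) (s := -α) (b := c)
    (by linarith) one_pos hc
  refine h.congr_fun (fun x _ => ?_) measurableSet_Ioi
  simp only [rpow_one, neg_mul]

lemma expInt_value {α : ℝ} (hα1 : α < 1) {c : ℝ} (hc : 0 < c) :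
    ∫ l in Ioi (0:ℝ), l ^ (-α) * Real.exp (-(c * l))
      = Real.Gamma (1 - α) * c ^ (α - 1) := by
  have h := integral_rpow_mul_exp_neg_mul_Ioi (a := 1 - α) (r := c) (by linarith) hc
  rw [show (1 : ℝ) - α - 1 = -α by ring] at h
  rw [h, one_div, Real.inv_rpow hc.le, ← Real.rpow_neg hc.le,
    show -(1 - α) = α - 1 by ring, mul_comm]

lemma kk_int {α T : ℝ} (hα1 : α < 1) (hα0 : 0 < α) (hT : 0 < T) : Integrable ((Ioo (0:ℝ) T).indicator (fun x => x ^ (α - 1)))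
    (volume : Measure ℝ) := by
  rw [integrable_indicator_iff measurableSet_Ioo]
  have h := intervalIntegral.intervalIntegrable_rpow' (a := 0) (b := T) (r := α - 1)
    (by linarith)
  rw [intervalIntegrable_iff_integrableOn_Ioc_of_le hT.le] at h
  exact h.mono_set Ioo_subset_Ioc_self

lemma kk_nonneg {α T : ℝ} (x : ℝ) : 0 ≤ (Ioo (0:ℝ) T).indicator (fun x => x ^ (α - 1)) x := by
  apply Set.indicator_nonneg
  intro y hy
  exact Real.rpow_nonneg hy.1.le _

lemma core_int {α T : ℝ} (hα0 : 0 < α) (hα1 : α < 1) (hT : 0 < T)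
    {w : ℝ → ℝ} (hwm : Measurable w) (hsupp : ∀ s, s ∉ Ioo 0 T → w s = 0)
    (hsq : Integrable (fun s => w s ^ 2) (volume : Measure ℝ)) : Integrable (fun z : ℝ × ℝ => {p : ℝ × ℝ | p.2 < p.1}.indicator
      (fun p => (p.1 - p.2) ^ (α - 1) * (w p.2 * w p.1)) z)
    ((volume : Measure ℝ).prod (volume : Measure ℝ)) := by
  set kk : ℝ → ℝ := (Ioo (0:ℝ) T).indicator (fun x => x ^ (α - 1)) with hkk
  have hkki : Integrable kk (volume : Measure ℝ) := kk_int hα1 hα0 hT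
  have hq : Integrable (fun s => w s ^ 2) (volume : Measure ℝ) := hsq
  have h1 : Integrable (fun p : ℝ × ℝ => w p.2 ^ 2 * kk (p.1 - p.2))
      ((volume : Measure ℝ).prod (volume : Measure ℝ)) := by
    have := hq.convolution_integrand (ContinuousLinearMap.mul ℝ ℝ) hkki
    simpa using this
  have h2 : Integrable (fun p : ℝ × ℝ => w p.1 ^ 2 * kk (p.1 - p.2))
      ((volume : Measure ℝ).prod (volume : Measure ℝ)) := by
    have hkk' : Integrable (fun x => kk (-x)) (volume : Measure ℝ) := hkki.comp_neg
    have h := hq.convolution_integrand (ContinuousLinearMap.mul ℝ ℝ) hkk'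
    have h' : Integrable (fun p : ℝ × ℝ => w p.2 ^ 2 * kk (p.2 - p.1))
        ((volume : Measure ℝ).prod (volume : Measure ℝ)) := by
      simpa [neg_sub] using h
    have := h'.swap
    simpa [Function.comp_def] using this
  have hdom : Integrable (fun p : ℝ × ℝ => w p.2 ^ 2 * kk (p.1 - p.2)
      + w p.1 ^ 2 * kk (p.1 - p.2))
      ((volume : Measure ℝ).prod (volume : Measure ℝ)) := h1.add h2
  refine hdom.mono' ?_ (Eventually.of_forall (fun z => ?_))
  · apply AEStronglyMeasurable.indicator
    · apply Measurable.aestronglyMeasurable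
      fun_prop
    · exact measurableSet_lt measurable_snd measurable_fst
  · by_cases hlt : z.2 < z.1
    · rw [Set.indicator_of_mem (by exact hlt)]
      by_cases hxT : z.1 - z.2 < T
      · have hkkx : kk (z.1 - z.2) = (z.1 - z.2) ^ (α - 1) :=
          Set.indicator_of_mem (Set.mem_Ioo.mpr ⟨by linarith, hxT⟩) _
        rw [Real.norm_eq_abs, abs_mul, hkkx]
        have h1 : |(z.1 - z.2) ^ (α - 1)| = (z.1 - z.2) ^ (α - 1) :=
          abs_of_nonneg (Real.rpow_nonneg (by linarith) _)
        rw [h1]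
        have h2 : |w z.2 * w z.1| ≤ w z.2 ^ 2 + w z.1 ^ 2 := abs_mul_le_sq_add_sq _ _
        have h3 : (0:ℝ) ≤ (z.1 - z.2) ^ (α - 1) := Real.rpow_nonneg (by linarith) _
        nlinarith
      · have hw1 : w z.2 * w z.1 = 0 := by
          by_cases h0 : w z.2 = 0
          · rw [h0, zero_mul]
          · have hz2 : z.2 ∈ Ioo 0 T := by
              by_contra hc; exact h0 (hsupp _ hc)
            have : z.1 > T := by
              have := hz2.1; linarith
            rw [hsupp z.1 (by simp [Set.mem_Ioo]; intro _; linarith), mul_zero]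
        rw [hw1, mul_zero, norm_zero]
        have := kk_nonneg (α := α) (T := T) (z.1 - z.2)
        nlinarith [sq_nonneg (w z.2), sq_nonneg (w z.1), this]
    · rw [Set.indicator_of_notMem (by exact hlt)]
      rw [norm_zero]
      have := kk_nonneg (α := α) (T := T) (z.1 - z.2)
      nlinarith [sq_nonneg (w z.2), sq_nonneg (w z.1), this]

lemma Hpos {T l : ℝ} (hT : 0 < T) (hl : 0 < l)
    {w : ℝ → ℝ} (hwm : Measurable w) (hsupp : ∀ s, s ∉ Ioo 0 T → w s = 0)
    (hint : Integrable w (volume : Measure ℝ)) :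
    0 ≤ ∫ z : ℝ × ℝ, {p : ℝ × ℝ | p.2 < p.1}.indicator
        (fun p => Real.exp (-(l * (p.1 - p.2))) * (w p.2 * w p.1)) z
        ∂((volume : Measure ℝ).prod (volume : Measure ℝ)) := by
  set a : ℝ → ℝ := fun s => Real.exp (-(l * s)) * w s with ha
  have ham : Measurable a := by fun_prop
  have haw : ∀ s, |a s| ≤ |w s| := by
    intro s
    by_cases hs : s ∈ Ioo 0 T
    · rw [ha]
      simp only [abs_mul, Real.abs_exp]
      have : Real.exp (-(l * s)) ≤ 1 := by
        rw [Real.exp_le_one_iff]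
        nlinarith [hs.1]
      nlinarith [abs_nonneg (w s)]
    · rw [hsupp s hs]
      simp [ha, hsupp s hs]
  have hai : Integrable a (volume : Measure ℝ) := by
    refine hint.abs.mono' ham.aestronglyMeasurable (Eventually.of_forall (fun s => ?_))
    simpa using haw s
  have hsuppa : ∀ s, s ∉ Ioo 0 T → a s = 0 := by
    intro s hs; simp [ha, hsupp s hs]
  set E : ℝ → ℝ := fun s => if 0 < s then Real.exp (2 * l * s) - 1 else 0 with hE
  have hEm : Measurable E := by
    apply Measurable.ite (measurableSet_lt measurable_const measurable_id) <;> fun_prop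
  -- pointwise decomposition
  set P1 : ℝ × ℝ → ℝ := {p : ℝ × ℝ | p.2 < p.1}.indicator (fun p => a p.2 * a p.1) with hP1
  set P2 : ℝ × ℝ → ℝ := {p : ℝ × ℝ | p.2 < p.1}.indicator
    (fun p => a p.2 * a p.1 * E p.2) with hP2
  have hdecomp : ∀ z : ℝ × ℝ, {p : ℝ × ℝ | p.2 < p.1}.indicator
      (fun p => Real.exp (-(l * (p.1 - p.2))) * (w p.2 * w p.1)) z = P1 z + P2 z := by
    intro z
    by_cases h : z.2 < z.1
    · rw [Set.indicator_of_mem (by exact h), hP1, hP2,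
        Set.indicator_of_mem (by exact h), Set.indicator_of_mem (by exact h)]
      by_cases hs : 0 < z.2
      · have hEz : E z.2 = Real.exp (2 * l * z.2) - 1 := if_pos hs
        rw [hEz, ha]
        have hexp : Real.exp (-(l * (z.1 - z.2)))
            = Real.exp (-(l * z.2)) * Real.exp (-(l * z.1)) * Real.exp (2 * l * z.2) := by
          rw [← Real.exp_add, ← Real.exp_add]
          ring_nf
        rw [hexp]
        ring
      · have hw0 : w z.2 = 0 := hsupp _ (by simp [Set.mem_Ioo]; intro h'; exact absurd h' hs)
        simp [ha, hw0]
    · rw [Set.indicator_of_notMem (by exact h), hP1, hP2,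
        Set.indicator_of_notMem (by exact h), Set.indicator_of_notMem (by exact h)]
      ring
  have haa : Integrable (fun z : ℝ × ℝ => |a z.1| * |a z.2|)
      ((volume : Measure ℝ).prod (volume : Measure ℝ)) := hai.abs.mul_prod hai.abs
  have hP1i : Integrable P1 ((volume : Measure ℝ).prod (volume : Measure ℝ)) := by
    refine haa.mono' ?_ (Eventually.of_forall (fun z => ?_))
    · exact AEStronglyMeasurable.indicator
        (Measurable.aestronglyMeasurable (by fun_prop)) (measurableSet_lt measurable_snd measurable_fst)
    · calc ‖P1 z‖ ≤ ‖a z.2 * a z.1‖ := norm_indicator_le_norm_self _ _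
      _ = |a z.1| * |a z.2| := by rw [Real.norm_eq_abs, abs_mul, mul_comm]
  have hP2i : Integrable P2 ((volume : Measure ℝ).prod (volume : Measure ℝ)) := by
    refine ((haa.const_mul (Real.exp (2 * l * T))).mono' ?_
      (Eventually.of_forall (fun z => ?_)))
    · exact AEStronglyMeasurable.indicator
        (Measurable.aestronglyMeasurable (by fun_prop)) (measurableSet_lt measurable_snd measurable_fst)
    · by_cases h : z.2 < z.1
      · rw [hP2, Set.indicator_of_mem (by exact h)]
        by_cases h0 : a z.2 = 0
        · rw [h0]
          simp only [zero_mul, norm_zero]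
          positivity
        · have hz2 : z.2 ∈ Ioo 0 T := by
            by_contra hc; exact h0 (hsuppa _ hc)
          have hE0 : 0 ≤ E z.2 := by
            rw [hE]
            simp only [if_pos hz2.1]
            nlinarith [Real.one_le_exp (show (0:ℝ) ≤ 2 * l * z.2 by nlinarith [hz2.1])]
          have hEb : E z.2 ≤ Real.exp (2 * l * T) := by
            rw [hE]
            simp only [if_pos hz2.1]
            nlinarith [Real.exp_le_exp.mpr (show 2 * l * z.2 ≤ 2 * l * T by nlinarith [hz2.2]),
              Real.exp_pos (2 * l * T)]
          rw [Real.norm_eq_abs, abs_mul, abs_mul]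
          have h1 : |E z.2| ≤ Real.exp (2 * l * T) := by rwa [abs_of_nonneg hE0]
          have h2 : |a z.2| * |a z.1| = |a z.1| * |a z.2| := mul_comm _ _
          nlinarith [abs_nonneg (a z.1), abs_nonneg (a z.2), abs_nonneg (E z.2),
            mul_nonneg (abs_nonneg (a z.2)) (abs_nonneg (a z.1))]
      · rw [hP2, Set.indicator_of_notMem (by exact h), norm_zero]
        positivity
  have hsplit : ∫ z : ℝ × ℝ, {p : ℝ × ℝ | p.2 < p.1}.indicator
      (fun p => Real.exp (-(l * (p.1 - p.2))) * (w p.2 * w p.1)) z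
      ∂((volume : Measure ℝ).prod (volume : Measure ℝ))
      = (∫ z, P1 z ∂((volume : Measure ℝ).prod (volume : Measure ℝ)))
        + ∫ z, P2 z ∂((volume : Measure ℝ).prod (volume : Measure ℝ)) := by
    rw [← integral_add hP1i hP2i]
    exact integral_congr_ae (Eventually.of_forall hdecomp)
  have hP1v : (∫ z, P1 z ∂((volume : Measure ℝ).prod (volume : Measure ℝ)))
      = (∫ x, a x) ^ 2 / 2 := symm_half a hai
  set Ψ : (ℝ × ℝ) × ℝ → ℝ := {q : (ℝ × ℝ) × ℝ | q.1.2 < q.1.1 ∧ 0 < q.2 ∧ q.2 < q.1.2}.indicator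
    (fun q => 2 * l * Real.exp (2 * l * q.2) * (a q.1.2 * a q.1.1)) with hΨ
  have hsetm : MeasurableSet {q : (ℝ × ℝ) × ℝ | q.1.2 < q.1.1 ∧ 0 < q.2 ∧ q.2 < q.1.2} := by
    have : {q : (ℝ × ℝ) × ℝ | q.1.2 < q.1.1 ∧ 0 < q.2 ∧ q.2 < q.1.2}
        = {q : (ℝ × ℝ) × ℝ | q.1.2 < q.1.1} ∩ ({q : (ℝ × ℝ) × ℝ | 0 < q.2}
          ∩ {q : (ℝ × ℝ) × ℝ | q.2 < q.1.2}) := by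
      ext q; simp [Set.mem_setOf_eq, and_assoc]
    rw [this]
    exact (measurableSet_lt measurable_fst.snd measurable_fst.fst).inter
      ((measurableSet_lt measurable_const measurable_snd).inter
        (measurableSet_lt measurable_snd measurable_fst.snd))
  have hΨmeas : AEStronglyMeasurable Ψ
      (((volume : Measure ℝ).prod (volume : Measure ℝ)).prod
        ((volume : Measure ℝ).restrict (Ioi 0))) := by
    apply AEStronglyMeasurable.indicator _ hsetm
    exact Measurable.aestronglyMeasurable (by fun_prop)
  have hΨint : Integrable Ψ
      (((volume : Measure ℝ).prod (volume : Measure ℝ)).prod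
        ((volume : Measure ℝ).restrict (Ioi 0))) := by
    have hA : Integrable ((Ioo (0:ℝ) T).indicator (fun _ => 2 * l * Real.exp (2 * l * T)))
        ((volume : Measure ℝ).restrict (Ioi 0)) := by
      apply Integrable.restrict
      rw [integrable_indicator_iff measurableSet_Ioo]
      exact integrableOn_const measure_Ioo_lt_top.ne
    have haa2 : Integrable (fun z : ℝ × ℝ => |a z.2| * |a z.1|)
        ((volume : Measure ℝ).prod (volume : Measure ℝ)) := by
      have heq : (fun z : ℝ × ℝ => |a z.2| * |a z.1|) = fun z => |a z.1| * |a z.2| := by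
        funext z; ring
      rw [heq]; exact haa
    have hg := haa2.mul_prod hA
    refine hg.mono' hΨmeas (Eventually.of_forall (fun q => ?_))
    by_cases h : q.1.2 < q.1.1 ∧ 0 < q.2 ∧ q.2 < q.1.2
    · rw [hΨ, Set.indicator_of_mem (by exact h)]
      by_cases h0 : a q.1.2 = 0
      · rw [h0]
        simp only [zero_mul, mul_zero, norm_zero, abs_zero]
        positivity
      · have hs : q.1.2 ∈ Ioo 0 T := by
          by_contra hc; exact h0 (hsuppa _ hc)
        have hu : q.2 ∈ Ioo 0 T := ⟨h.2.1, lt_trans h.2.2 hs.2⟩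
        rw [Set.indicator_of_mem hu]
        have e1 : |Real.exp (2 * l * q.2)| = Real.exp (2 * l * q.2) :=
          abs_of_pos (Real.exp_pos _)
        have e2 : Real.exp (2 * l * q.2) ≤ Real.exp (2 * l * T) :=
          Real.exp_le_exp.mpr (by nlinarith [hu.2])
        have e3 : |2 * l| = 2 * l := abs_of_pos (by linarith)
        have e4 : ‖2 * l * Real.exp (2 * l * q.2) * (a q.1.2 * a q.1.1)‖
            = 2 * l * Real.exp (2 * l * q.2) * |a q.1.2 * a q.1.1| := by
          rw [Real.norm_eq_abs, abs_mul]
          congr 1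
          rw [abs_mul, e1, e3]
        rw [e4]
        calc 2 * l * Real.exp (2 * l * q.2) * |a q.1.2 * a q.1.1|
            ≤ 2 * l * Real.exp (2 * l * T) * |a q.1.2 * a q.1.1| :=
              mul_le_mul_of_nonneg_right (by nlinarith [e2]) (abs_nonneg _)
          _ = |a q.1.2| * |a q.1.1| * (2 * l * Real.exp (2 * l * T)) := by
              rw [abs_mul]; ring
    · rw [hΨ, Set.indicator_of_notMem (by exact h), norm_zero]
      have h1 : 0 ≤ (Ioo (0:ℝ) T).indicator (fun _ => 2 * l * Real.exp (2 * l * T)) q.2 :=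
        Set.indicator_nonneg (fun _ _ => by positivity) _
      exact mul_nonneg (mul_nonneg (abs_nonneg _) (abs_nonneg _)) h1
  have hrep : ∀ z : ℝ × ℝ, P2 z = ∫ u in Ioi (0:ℝ), Ψ (z, u) := by
    intro z
    by_cases h : z.2 < z.1
    · rw [hP2, Set.indicator_of_mem (by exact h)]
      have hfun : (fun u => Ψ (z, u)) = fun u => (a z.2 * a z.1)
          * ((Ioo 0 z.2).indicator (fun u => 2 * l * Real.exp (2 * l * u)) u) := by
        funext u
        by_cases hu : u ∈ Ioo 0 z.2
        · rw [hΨ, Set.indicator_of_mem (show (z, u) ∈ {q : (ℝ × ℝ) × ℝ | q.1.2 < q.1.1 ∧ 0 < q.2 ∧ q.2 < q.1.2} from ⟨h, hu.1, hu.2⟩),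
            Set.indicator_of_mem hu]
          ring
        · rw [hΨ, Set.indicator_of_notMem
              (fun hc => hu (Set.mem_Ioo.mpr ⟨hc.2.1, hc.2.2⟩)),
            Set.indicator_of_notMem hu, mul_zero]
      rw [hfun, integral_const_mul]
      have hq : ∫ u in Ioi (0:ℝ), (Ioo 0 z.2).indicator (fun u => 2 * l * Real.exp (2 * l * u)) u
          = E z.2 := by
        rw [setIntegral_indicator measurableSet_Ioo]
        have hss : Ioi (0:ℝ) ∩ Ioo 0 z.2 = Ioo 0 z.2 := by
          ext x; simp only [Set.mem_inter_iff, Set.mem_Ioi, Set.mem_Ioo]; tauto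
        rw [hss]
        by_cases hz : 0 < z.2
        · rw [← MeasureTheory.integral_Ioc_eq_integral_Ioo,
            ← intervalIntegral.integral_of_le hz.le]
          have hder : ∫ u in (0:ℝ)..z.2, 2 * l * Real.exp (2 * l * u)
              = Real.exp (2 * l * z.2) - Real.exp (2 * l * 0) := by
            apply intervalIntegral.integral_eq_sub_of_hasDerivAt (f := fun u => Real.exp (2 * l * u))
            · intro u _
              have hd := ((hasDerivAt_id u).const_mul (2 * l)).exp
              simpa [mul_comm, mul_one] using hd
            · apply Continuous.intervalIntegrable; fun_prop
          rw [hder]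
          simp [hE, if_pos hz]
        · have hemp : Ioo (0:ℝ) z.2 = ∅ := Ioo_eq_empty (by linarith)
          rw [hemp]
          simp [hE, hz]
      rw [hq]
    · rw [hP2, Set.indicator_of_notMem (by exact h)]
      have hzero : (fun u => Ψ (z, u)) = fun _ => (0:ℝ) := by
        funext u; rw [hΨ, Set.indicator_of_notMem (fun hc => h hc.1)]
      rw [hzero]
      simp
  have hP2v : (∫ z, P2 z ∂((volume : Measure ℝ).prod (volume : Measure ℝ)))
      = ∫ u in Ioi (0:ℝ), ∫ z, Ψ (z, u)
          ∂((volume : Measure ℝ).prod (volume : Measure ℝ)) := by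
    calc ∫ z, P2 z ∂((volume : Measure ℝ).prod (volume : Measure ℝ))
        = ∫ z, (∫ u in Ioi (0:ℝ), Ψ (z, u))
            ∂((volume : Measure ℝ).prod (volume : Measure ℝ)) :=
          integral_congr_ae (Eventually.of_forall hrep)
      _ = ∫ u in Ioi (0:ℝ), ∫ z, Ψ (z, u)
            ∂((volume : Measure ℝ).prod (volume : Measure ℝ)) :=
          integral_integral_swap hΨint
  have hP2nn : 0 ≤ ∫ u in Ioi (0:ℝ), ∫ z, Ψ (z, u)
      ∂((volume : Measure ℝ).prod (volume : Measure ℝ)) := by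
    apply setIntegral_nonneg measurableSet_Ioi
    intro u hu
    set b : ℝ → ℝ := (Ioi u).indicator a with hb
    have hbi : Integrable b (volume : Measure ℝ) := hai.indicator measurableSet_Ioi
    have hfun : (fun z : ℝ × ℝ => Ψ (z, u)) = fun z => (2 * l * Real.exp (2 * l * u))
        * ({p : ℝ × ℝ | p.2 < p.1}.indicator (fun p => b p.2 * b p.1) z) := by
      funext z
      by_cases h : z.2 < z.1
      · by_cases h2 : u < z.2
        · rw [hΨ, Set.indicator_of_mem (show (z, u) ∈ {q : (ℝ × ℝ) × ℝ | q.1.2 < q.1.1 ∧ 0 < q.2 ∧ q.2 < q.1.2} from ⟨h, hu, h2⟩),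
            Set.indicator_of_mem (by exact h)]
          have hb2 : b z.2 = a z.2 := Set.indicator_of_mem (Set.mem_Ioi.mpr h2) _
          have hb1 : b z.1 = a z.1 := Set.indicator_of_mem (Set.mem_Ioi.mpr (lt_trans h2 h)) _
          rw [hb2, hb1]
        · rw [hΨ, Set.indicator_of_notMem (fun hc => h2 hc.2.2),
            Set.indicator_of_mem (by exact h)]
          have hb2 : b z.2 = 0 := Set.indicator_of_notMem (by simpa using h2) _
          rw [hb2, zero_mul, mul_zero]
      · rw [hΨ, Set.indicator_of_notMem (fun hc => h hc.1),
          Set.indicator_of_notMem (by exact h), mul_zero]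
    rw [hfun, integral_const_mul, symm_half b hbi]
    positivity
  rw [hsplit, hP1v, hP2v]
  have := hP2nn
  positivity

lemma F0_nonneg {α T : ℝ} (hα0 : 0 < α) (hα1 : α < 1) (hT : 0 < T)
    {w : ℝ → ℝ} (hwm : Measurable w) (hsupp : ∀ s, s ∉ Ioo 0 T → w s = 0)
    (hsq : Integrable (fun s => w s ^ 2) (volume : Measure ℝ))
    (hint : Integrable w (volume : Measure ℝ)) :
    0 ≤ ∫ z : ℝ × ℝ, {p : ℝ × ℝ | p.2 < p.1}.indicator
        (fun p => (p.1 - p.2) ^ (α - 1) * (w p.2 * w p.1)) z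
        ∂((volume : Measure ℝ).prod (volume : Measure ℝ)) := by
  set Φ : (ℝ × ℝ) × ℝ → ℝ := {q : (ℝ × ℝ) × ℝ | q.1.2 < q.1.1}.indicator
    (fun q => q.2 ^ (-α) * Real.exp (-(q.2 * (q.1.1 - q.1.2))) * (w q.1.2 * w q.1.1)) with hΦ
  have hsetm : MeasurableSet {q : (ℝ × ℝ) × ℝ | q.1.2 < q.1.1} :=
    measurableSet_lt measurable_fst.snd measurable_fst.fst
  have hΦmeas : AEStronglyMeasurable Φ
      (((volume : Measure ℝ).prod (volume : Measure ℝ)).prod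
        ((volume : Measure ℝ).restrict (Ioi 0))) := by
    apply AEStronglyMeasurable.indicator _ hsetm
    exact Measurable.aestronglyMeasurable (by fun_prop)
  have hsec : ∀ z : ℝ × ℝ, Integrable (fun lam => Φ (z, lam))
      ((volume : Measure ℝ).restrict (Ioi 0)) := by
    intro z
    by_cases h : z.2 < z.1
    · have hc : 0 < z.1 - z.2 := by linarith
      have hfun : (fun lam => Φ (z, lam)) = fun lam =>
          (lam ^ (-α) * Real.exp (-((z.1 - z.2) * lam))) * (w z.2 * w z.1) := by
        funext lam
        rw [hΦ, Set.indicator_of_mem (show (z, lam) ∈ {q : (ℝ × ℝ) × ℝ | q.1.2 < q.1.1} from h),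
          mul_comm lam (z.1 - z.2)]
      rw [hfun]
      exact (expInt_integrableOn hα1 hc).mul_const _
    · have hfun : (fun lam => Φ (z, lam)) = fun _ => (0:ℝ) := by
        funext lam
        rw [hΦ, Set.indicator_of_notMem (show (z, lam) ∉ {q : (ℝ × ℝ) × ℝ | q.1.2 < q.1.1} from h)]
      rw [hfun]
      exact integrable_zero _ _ _
  have key : (fun z : ℝ × ℝ => ∫ lam in Ioi (0:ℝ), ‖Φ (z, lam)‖)
      = fun z => Real.Gamma (1 - α) * ({p : ℝ × ℝ | p.2 < p.1}.indicator
        (fun p => (p.1 - p.2) ^ (α - 1) * (|w p.2| * |w p.1|)) z) := by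
    funext z
    by_cases h : z.2 < z.1
    · have hc : 0 < z.1 - z.2 := by linarith
      have h1 : (fun lam => ‖Φ (z, lam)‖) =ᵐ[(volume : Measure ℝ).restrict (Ioi 0)]
          fun lam => (lam ^ (-α) * Real.exp (-((z.1 - z.2) * lam))) * |w z.2 * w z.1| := by
        filter_upwards [ae_restrict_mem measurableSet_Ioi] with lam hlam
        rw [hΦ, Set.indicator_of_mem (show (z, lam) ∈ {q : (ℝ × ℝ) × ℝ | q.1.2 < q.1.1} from h)]
        rw [Real.norm_eq_abs, abs_mul, abs_mul,
          abs_of_nonneg (Real.rpow_nonneg (le_of_lt hlam) _),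
          abs_of_pos (Real.exp_pos _), mul_comm lam (z.1 - z.2)]
      rw [integral_congr_ae h1, integral_mul_const, expInt_value hα1 hc,
        Set.indicator_of_mem (show z ∈ {p : ℝ × ℝ | p.2 < p.1} from h), abs_mul]
      ring
    · have hfun : (fun lam => ‖Φ (z, lam)‖) = fun _ => (0:ℝ) := by
        funext lam
        rw [hΦ, Set.indicator_of_notMem
          (show (z, lam) ∉ {q : (ℝ × ℝ) × ℝ | q.1.2 < q.1.1} from h), norm_zero]
      rw [hfun, integral_zero,
        Set.indicator_of_notMem (show z ∉ {p : ℝ × ℝ | p.2 < p.1} from h), mul_zero]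
  have hΦint : Integrable Φ
      (((volume : Measure ℝ).prod (volume : Measure ℝ)).prod
        ((volume : Measure ℝ).restrict (Ioi 0))) := by
    rw [integrable_prod_iff hΦmeas]
    constructor
    · exact Eventually.of_forall hsec
    · rw [key]
      apply Integrable.const_mul
      have habs := core_int hα0 hα1 hT (hwm.abs)
        (fun s hs => by simp [hsupp s hs])
        (by
          have : (fun s => |w s| ^ 2) = fun s => w s ^ 2 := by
            funext s; exact sq_abs _
          rw [this]; exact hsq)
      exact habs
  have hswap : ∫ z : ℝ × ℝ, (∫ lam in Ioi (0:ℝ), Φ (z, lam))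
        ∂((volume : Measure ℝ).prod (volume : Measure ℝ))
      = ∫ lam in Ioi (0:ℝ), ∫ z : ℝ × ℝ, Φ (z, lam)
        ∂((volume : Measure ℝ).prod (volume : Measure ℝ)) :=
    integral_integral_swap hΦint
  have hleft : ∫ z : ℝ × ℝ, (∫ lam in Ioi (0:ℝ), Φ (z, lam))
        ∂((volume : Measure ℝ).prod (volume : Measure ℝ))
      = Real.Gamma (1 - α) * ∫ z : ℝ × ℝ, {p : ℝ × ℝ | p.2 < p.1}.indicator
        (fun p => (p.1 - p.2) ^ (α - 1) * (w p.2 * w p.1)) z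
        ∂((volume : Measure ℝ).prod (volume : Measure ℝ)) := by
    rw [← integral_const_mul]
    apply integral_congr_ae
    apply Eventually.of_forall
    intro z
    beta_reduce
    by_cases h : z.2 < z.1
    · have hc : 0 < z.1 - z.2 := by linarith
      have hfun : (fun lam => Φ (z, lam)) = fun lam =>
          (lam ^ (-α) * Real.exp (-((z.1 - z.2) * lam))) * (w z.2 * w z.1) := by
        funext lam
        rw [hΦ, Set.indicator_of_mem (show (z, lam) ∈ {q : (ℝ × ℝ) × ℝ | q.1.2 < q.1.1} from h),
          mul_comm lam (z.1 - z.2)]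
      rw [hfun, integral_mul_const, expInt_value hα1 hc,
        Set.indicator_of_mem (show z ∈ {p : ℝ × ℝ | p.2 < p.1} from h)]
      ring
    · have hfun : (fun lam => Φ (z, lam)) = fun _ => (0:ℝ) := by
        funext lam
        rw [hΦ, Set.indicator_of_notMem (show (z, lam) ∉ {q : (ℝ × ℝ) × ℝ | q.1.2 < q.1.1} from h)]
      rw [hfun, integral_zero,
        Set.indicator_of_notMem (show z ∉ {p : ℝ × ℝ | p.2 < p.1} from h), mul_zero]
  have hright : 0 ≤ ∫ lam in Ioi (0:ℝ), ∫ z : ℝ × ℝ, Φ (z, lam)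
      ∂((volume : Measure ℝ).prod (volume : Measure ℝ)) := by
    apply setIntegral_nonneg measurableSet_Ioi
    intro lam hlam
    have hfun : (fun z : ℝ × ℝ => Φ (z, lam)) = fun z => lam ^ (-α)
        * ({p : ℝ × ℝ | p.2 < p.1}.indicator
          (fun p => Real.exp (-(lam * (p.1 - p.2))) * (w p.2 * w p.1)) z) := by
      funext z
      by_cases h : z.2 < z.1
      · rw [hΦ, Set.indicator_of_mem (show (z, lam) ∈ {q : (ℝ × ℝ) × ℝ | q.1.2 < q.1.1} from h),
          Set.indicator_of_mem (show z ∈ {p : ℝ × ℝ | p.2 < p.1} from h)]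
        ring
      · rw [hΦ, Set.indicator_of_notMem (show (z, lam) ∉ {q : (ℝ × ℝ) × ℝ | q.1.2 < q.1.1} from h),
          Set.indicator_of_notMem (show z ∉ {p : ℝ × ℝ | p.2 < p.1} from h), mul_zero]
    rw [hfun, integral_const_mul]
    exact mul_nonneg (Real.rpow_nonneg (le_of_lt hlam) _)
      (Hpos hT hlam hwm hsupp hint)
  have hΓpos : 0 < Real.Gamma (1 - α) := Real.Gamma_pos_of_pos (by linarith)
  nlinarith [hswap, hleft, hright]

/-- Positivity of fractional integration: for `v ∈ H¹(0,T)` (with `v'`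
extended by zero outside `(0,T)`), `∫₀ᵀ (I_{0+}^α v') v' ≥ 0`. -/
theorem stmt11 (α T : ℝ) (hα0 : 0 < α) (hα1 : α < 1) (hT : 0 < T)
    (v : ℝ → ℝ) (hdiff : ∀ t ∈ Set.Ioo 0 T, DifferentiableAt ℝ v t)
    (hv : MemLp v 2 (volume.restrict (Set.Ioo 0 T)))
    (hv' : MemLp (deriv v) 2 (volume.restrict (Set.Ioo 0 T))) :
    0 ≤ ∫ t in (0:ℝ)..T,
      RLI α ((Set.Ioo 0 T).indicator (deriv v)) t * deriv v t := by
  set w : ℝ → ℝ := (Set.Ioo 0 T).indicator (deriv v) with hw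
  have hwm : Measurable w := (measurable_deriv v).indicator measurableSet_Ioo
  have hsupp : ∀ s, s ∉ Ioo 0 T → w s = 0 := fun s hs => Set.indicator_of_notMem hs _
  have hw2 : MemLp w 2 (volume : Measure ℝ) :=
    (memLp_indicator_iff_restrict measurableSet_Ioo).mpr hv'
  have hsq : Integrable (fun s => w s ^ 2) (volume : Measure ℝ) := hw2.integrable_sq
  have hind1 : Integrable ((Ioo (0:ℝ) T).indicator (fun _ => (1:ℝ))) (volume : Measure ℝ) :=
    (integrable_indicator_iff measurableSet_Ioo).mpr
      (integrableOn_const measure_Ioo_lt_top.ne)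
  have hint : Integrable w (volume : Measure ℝ) := by
    refine (hsq.add hind1).mono' hwm.aestronglyMeasurable (Eventually.of_forall (fun s => ?_))
    simp only [Pi.add_apply]
    by_cases hs : s ∈ Ioo 0 T
    · rw [Set.indicator_of_mem hs, Real.norm_eq_abs]
      nlinarith [sq_nonneg (|w s| - 1), sq_abs (w s), abs_nonneg (w s)]
    · rw [hsupp s hs, Set.indicator_of_notMem hs]
      simp
  set F0 : ℝ × ℝ → ℝ := {p : ℝ × ℝ | p.2 < p.1}.indicator
    (fun p => (p.1 - p.2) ^ (α - 1) * (w p.2 * w p.1)) with hF0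
  have hF0i : Integrable F0 ((volume : Measure ℝ).prod (volume : Measure ℝ)) :=
    core_int hα0 hα1 hT hwm hsupp hsq
  have hF0nn : 0 ≤ ∫ z : ℝ × ℝ, F0 z ∂((volume : Measure ℝ).prod (volume : Measure ℝ)) :=
    F0_nonneg hα0 hα1 hT hwm hsupp hsq hint
  have hker : ∀ t s : ℝ, F0 (t, s)
      = ((Ioc 0 t).indicator (fun s => (t - s) ^ (α - 1) * w s) s) * w t := by
    intro t s
    by_cases h1 : s < t
    · by_cases h2 : 0 < s
      · rw [hF0, Set.indicator_of_mem (show (t, s) ∈ {p : ℝ × ℝ | p.2 < p.1} from h1),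
          Set.indicator_of_mem (Set.mem_Ioc.mpr ⟨h2, h1.le⟩)]
        ring
      · have hws : w s = 0 := hsupp s (fun hc => h2 hc.1)
        rw [hF0, Set.indicator_of_mem (show (t, s) ∈ {p : ℝ × ℝ | p.2 < p.1} from h1), hws,
          Set.indicator_of_notMem (fun hc : s ∈ Ioc 0 t => h2 hc.1)]
        ring
    · by_cases h2 : s ∈ Ioc 0 t
      · have hst : s = t := le_antisymm h2.2 (not_lt.mp h1)
        rw [hF0, Set.indicator_of_notMem (show (t, s) ∉ {p : ℝ × ℝ | p.2 < p.1} from h1),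
          Set.indicator_of_mem h2, hst, sub_self,
          Real.zero_rpow (ne_of_lt (show α - 1 < 0 by linarith))]
        ring
      · rw [hF0, Set.indicator_of_notMem (show (t, s) ∉ {p : ℝ × ℝ | p.2 < p.1} from h1),
          Set.indicator_of_notMem h2]
        ring
  have hinner : ∀ t : ℝ, (∫ s, F0 (t, s))
      = (∫ s in Ioc 0 t, (t - s) ^ (α - 1) * w s) * w t := by
    intro t
    rw [show (fun s => F0 (t, s))
        = fun s => ((Ioc 0 t).indicator (fun s => (t - s) ^ (α - 1) * w s) s) * w t
      from funext (hker t)]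
    rw [integral_mul_const, integral_indicator measurableSet_Ioc]
  have hΓ : 0 ≤ (Real.Gamma α)⁻¹ := inv_nonneg.mpr (Real.Gamma_pos_of_pos hα0).le
  have hprod : ∫ z : ℝ × ℝ, F0 z ∂((volume : Measure ℝ).prod (volume : Measure ℝ))
      = ∫ t, ∫ s, F0 (t, s) := integral_prod _ hF0i
  rw [intervalIntegral.integral_of_le hT.le]
  have hcong : ∫ t in Ioc 0 T, RLI α w t * deriv v t
      = ∫ t in Ioc 0 T, RLI α w t * w t := by
    apply integral_congr_ae
    have hne : ∀ᵐ t ∂(volume : Measure ℝ), t ≠ T := by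
      have hset : {a : ℝ | ¬ a ≠ T} = {T} := by ext x; simp
      rw [ae_iff, hset]
      exact measure_singleton T
    filter_upwards [ae_restrict_mem measurableSet_Ioc, ae_restrict_of_ae hne] with t ht htn
    have htoo : t ∈ Ioo 0 T := ⟨ht.1, lt_of_le_of_ne ht.2 htn⟩
    rw [hw, Set.indicator_of_mem htoo]
  rw [hcong, ← integral_indicator measurableSet_Ioc]
  have hpt : ∀ t : ℝ, (Ioc 0 T).indicator (fun t => RLI α w t * w t) t
      = (Real.Gamma α)⁻¹ * ∫ s, F0 (t, s) := by
    intro t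
    by_cases ht : t ∈ Ioc 0 T
    · rw [Set.indicator_of_mem ht, hinner t, RLI, intervalIntegral.integral_of_le ht.1.le]
      ring
    · rw [Set.indicator_of_notMem ht]
      have hwt : w t = 0 := hsupp t (fun hc => ht ⟨hc.1, hc.2.le⟩)
      rw [hinner t, hwt, mul_zero, mul_zero]
  rw [integral_congr_ae (Eventually.of_forall hpt), integral_const_mul, ← hprod]
  exact mul_nonneg hΓ hF0nn
end
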